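/- Let G = G_{3,n} = S_3 □ P_n with n even. Then rn(G) ≤ (3n²)/2 + n. -/

import Mathlib

/-- The star graph on `m` vertices with center `0`. -/
def starGraph (m : ℕ) : SimpleGraph (Fin m) :=
  SimpleGraph.fromRel (fun a _ => (a : ℕ) = 0)

/-- The path graph on `n` vertices `0, 1, …, n-1`. -/
def pathGraph' (n : ℕ) : SimpleGraph (Fin n) :=
  SimpleGraph.fromRel (fun a b => (a : ℕ) + 1 = b)

/-- The stacked-book graph `G_{m,n} = S_m □ P_n`. -/
def bookGraph (m n : ℕ) : SimpleGraph (Fin m × Fin n) :=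
  (starGraph m).boxProd (pathGraph' n)

/-- `f` is a radio labeling of `G` for diameter `D`:
`|f u - f v| ≥ D + 1 - d(u,v)` for all distinct `u, v`. -/
def IsRadioLabeling {V : Type*} (G : SimpleGraph V) (D : ℕ) (f : V → ℕ) : Prop :=
  ∀ u v : V, u ≠ v → (D : ℤ) + 1 - G.dist u v ≤ |(f u : ℤ) - (f v : ℤ)|

/-- The span of a labeling: maximum label minus minimum label. -/
noncomputable def span {V : Type*} (f : V → ℕ) : ℕ :=
  sSup (Set.range f) - sInf (Set.range f)

/-- The radio number of the stacked-book graph `G_{m,n}` (whose diameter is `n+1`). -/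
noncomputable def rnBook (m n : ℕ) : ℕ :=
  sInf {s | ∃ f : Fin m × Fin n → ℕ, IsRadioLabeling (bookGraph m n) (n + 1) f ∧ span f = s}

/-!
Write `n = m + m` and split the path coordinate as `i = k` or `i = m + k` with `k < m`; page `0`
is the centre of the star. Block `k` consists of the six vertices
`(1, m+k), (2, k), (0, m+k), (1, k), (2, m+k), (0, k)`, labelled in this order by
`(6m+3)k + 0, m, 2m+1, 3m+2, 4m+2, 5m+3`. Since distances add in a box product, every label gap
`m` or `m+1` between consecutive vertices is made up by a distance `m+2` or `m+1`, and the radio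
condition `|f u - f v| + d(u,v) ≥ 2m+2` is checked by cases within a block and between adjacent
blocks; vertices two or more blocks apart have labels at least `7m+3` apart. The largest label is
`(6m+3)(m-1) + 5m+3 = 3n²/2 + n`.
-/

namespace SimpleGraph

variable {V : Type*} {G : SimpleGraph V}

lemma dist_boxProd {W : Type*} {H : SimpleGraph W} {x y : V × W}
    (h₁ : G.Reachable x.1 y.1) (h₂ : H.Reachable x.2 y.2) :
    (G □ H).dist x y = G.dist x.1 y.1 + H.dist x.2 y.2 := by
  simp only [dist, edist_boxProd]
  exact ENat.toNat_add (edist_ne_top_iff_reachable.mpr h₁) (edist_ne_top_iff_reachable.mpr h₂)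

lemma Walk.abs_sub_le_length (f : V → ℤ) (hf : ∀ u v, G.Adj u v → |f u - f v| ≤ 1)
    {u v : V} (p : G.Walk u v) : |f u - f v| ≤ p.length := by
  induction p with
  | nil => simp
  | cons h p ih =>
    rw [length_cons, Nat.cast_succ]
    calc _ ≤ |f _ - f _| + |f _ - f _| := abs_sub_le _ _ _
      _ ≤ _ := by linarith [hf _ _ h]

lemma Reachable.abs_sub_le_dist (f : V → ℤ) (hf : ∀ u v, G.Adj u v → |f u - f v| ≤ 1)
    {u v : V} (h : G.Reachable u v) : |f u - f v| ≤ G.dist u v := by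
  obtain ⟨p, hp⟩ := h.exists_walk_length_eq_dist
  exact hp ▸ p.abs_sub_le_length f hf

end SimpleGraph

lemma pathGraph'_eq_pathGraph (n : ℕ) : pathGraph' n = SimpleGraph.pathGraph n := by
  ext a b
  simp only [pathGraph', SimpleGraph.fromRel_adj, SimpleGraph.pathGraph_adj, ne_eq, Fin.ext_iff]
  omega

lemma pathGraph'_preconnected (n : ℕ) : (pathGraph' n).Preconnected :=
  pathGraph'_eq_pathGraph n ▸ SimpleGraph.pathGraph_preconnected n

lemma abs_sub_le_dist_pathGraph' {n : ℕ} (i j : Fin n) :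
    |(i : ℤ) - j| ≤ (pathGraph' n).dist i j := by
  refine (pathGraph'_preconnected n i j).abs_sub_le_dist (fun k : Fin n => (k : ℤ))
    fun u v h => ?_
  rw [pathGraph'_eq_pathGraph, SimpleGraph.pathGraph_adj] at h
  rw [abs_le]
  omega

lemma starGraph_succ (k : ℕ) : starGraph (k + 1) = SimpleGraph.starGraph 0 := by
  ext a b
  simp only [starGraph, SimpleGraph.fromRel_adj, SimpleGraph.starGraph_adj, Fin.ext_iff,
    Fin.val_zero]

lemma starGraph_connected (k : ℕ) : (starGraph (k + 1)).Connected :=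
  starGraph_succ k ▸ SimpleGraph.connected_starGraph 0

lemma one_lt_dist_starGraph {k : ℕ} {a b : Fin (k + 1)} (hab : a ≠ b) (ha : a ≠ 0)
    (hb : b ≠ 0) : 1 < (starGraph (k + 1)).dist a b := by
  refine (starGraph_connected k).one_lt_dist_of_ne_of_not_adj hab fun h => ?_
  rw [starGraph_succ] at h
  rcases (SimpleGraph.starGraph_adj.mp h).2 with h | h <;> contradiction

/-- The offset of a vertex within its block; the `Bool` says whether it lies in the upper half
`i = m + k` of the path. -/
def pageOffset (m : ℕ) : Fin 3 → Bool → ℕ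
  | 1, true => 0
  | 2, false => m
  | 0, true => 2 * m + 1
  | 1, false => 3 * m + 2
  | 2, true => 4 * m + 2
  | 0, false => 5 * m + 3

lemma pageOffset_gap {m : ℕ} {a b : Fin 3} {p q : Bool} {c : ℕ} (hc : c ≤ 1)
    (hne : a ≠ b ∨ p ≠ q ∨ c ≠ 0) {d : ℕ} (hd₁ : a ≠ b → 1 ≤ d)
    (hd₂ : a ≠ b → a ≠ 0 → b ≠ 0 → 2 ≤ d) :
    2 * m + 2 ≤ |(pageOffset m a p : ℤ) - ((6 * m + 3) * c + pageOffset m b q)|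
      + |((cond p m 0 : ℕ) : ℤ) - (c + (cond q m 0 : ℕ))| + d := by
  simp only [← Int.natCast_natAbs]
  interval_cases c <;> fin_cases a <;> fin_cases b <;> cases p <;> cases q <;>
    simp +decide only [pageOffset, cond_true, cond_false, true_implies]
      at hd₁ hd₂ hne ⊢ <;>
    omega

lemma pageOffset_le (m : ℕ) (a : Fin 3) (p : Bool) : pageOffset m a p ≤ 5 * m + 3 := by
  fin_cases a <;> cases p <;> simp only [pageOffset] <;> omega

def bookLabel (m : ℕ) (x : Fin 3 × Fin (m + m)) : ℕ :=
  (6 * m + 3) * (x.2 % m) + pageOffset m x.1 (m ≤ x.2)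

lemma bookLabel_le (m : ℕ) (x : Fin 3 × Fin (m + m)) : bookLabel m x ≤ 6 * m ^ 2 + 2 * m := by
  have hk : x.2 % m + 1 ≤ m := Nat.mod_lt _ (by have := x.2.pos; omega)
  have := Nat.mul_le_mul_left (6 * m + 3) hk
  have := pageOffset_le m x.1 (m ≤ x.2)
  rw [bookLabel]
  nlinarith

lemma eq_mod_add_cond {m i : ℕ} (hi : i < m + m) : i = i % m + cond (decide (m ≤ i)) m 0 := by
  by_cases h : m ≤ i
  · rw [Nat.mod_eq_sub_mod h, Nat.mod_eq_of_lt (by omega)]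
    simp [h]
  · simp [h, Nat.mod_eq_of_lt (not_le.mp h)]

lemma bookLabel_gap {m : ℕ} {x y : Fin 3 × Fin (m + m)} (hxy : x ≠ y) {d : ℕ}
    (hd₁ : x.1 ≠ y.1 → 1 ≤ d) (hd₂ : x.1 ≠ y.1 → x.1 ≠ 0 → y.1 ≠ 0 → 2 ≤ d) :
    2 * m + 2 ≤ |(bookLabel m x : ℤ) - bookLabel m y| + |(x.2 : ℤ) - y.2| + d := by
  wlog hle : x.2 % m ≤ y.2 % m generalizing x y
  · have := this hxy.symm (fun h => hd₁ h.symm) (fun h hy hx => hd₂ h.symm hx hy)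
      (le_of_not_ge hle)
    rwa [abs_sub_comm, abs_sub_comm (y.2 : ℤ)] at this
  obtain ⟨a, i, hi⟩ := x
  obtain ⟨b, j, hj⟩ := y
  simp only [bookLabel] at hle hd₁ hd₂ ⊢
  obtain ⟨c, hc⟩ := Nat.exists_eq_add_of_le hle
  have hi' := eq_mod_add_cond hi
  have hj' := eq_mod_add_cond hj
  set p := decide (m ≤ i)
  set q := decide (m ≤ j)
  set k := i % m
  rw [hc] at hj' ⊢
  have hL : (((6 * m + 3) * k + pageOffset m a p : ℕ) : ℤ) -
      (((6 * m + 3) * (k + c) + pageOffset m b q : ℕ) : ℤ) =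
      pageOffset m a p - ((6 * m + 3) * c + pageOffset m b q) := by push_cast; ring
  have hI : (i : ℤ) - j = ((cond p m 0 : ℕ) : ℤ) - (c + (cond q m 0 : ℕ)) := by omega
  rw [hL, hI]
  rcases le_or_gt c 1 with hc1 | hc2
  · refine pageOffset_gap hc1 ?_ hd₁ hd₂
    by_contra! h
    obtain ⟨rfl, hpq, rfl⟩ := h
    rw [hpq] at hi'
    exact hxy (by simp only [Prod.mk.injEq, Fin.mk.injEq, true_and]; omega)
  · have : (6 * m + 3 : ℤ) * 2 ≤ (6 * m + 3) * c :=
      mul_le_mul_of_nonneg_left (by exact_mod_cast hc2) (by positivity)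
    have := pageOffset_le m a p
    rw [← Int.natCast_natAbs, ← Int.natCast_natAbs]
    omega

lemma isRadioLabeling_bookLabel (m : ℕ) :
    IsRadioLabeling (bookGraph 3 (m + m)) (m + m + 1) (bookLabel m) := by
  intro x y hxy
  have hstar := (starGraph_connected 2).preconnected x.1 y.1
  rw [bookGraph, SimpleGraph.dist_boxProd hstar (pathGraph'_preconnected _ x.2 y.2)]
  have hpath := abs_sub_le_dist_pathGraph' x.2 y.2
  have hgap := bookLabel_gap hxy hstar.pos_dist_of_ne one_lt_dist_starGraph
  push_cast
  linarith

lemma span_le_of_forall_le {V : Type*} {f : V → ℕ} {B : ℕ} (h : ∀ v, f v ≤ B) : span f ≤ B :=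
  (Nat.sub_le _ _).trans (csSup_le' (by rintro _ ⟨v, rfl⟩; exact h v))

theorem rnBook_three_upper_general (n : ℕ) (hn : Even n) :
    rnBook 3 n ≤ 3 * n ^ 2 / 2 + n := by
  obtain ⟨m, rfl⟩ := hn
  calc rnBook 3 (m + m) ≤ span (bookLabel m) := Nat.sInf_le ⟨_, isRadioLabeling_bookLabel m, rfl⟩
    _ ≤ 6 * m ^ 2 + 2 * m := span_le_of_forall_le (bookLabel_le m)
    _ = 3 * (m + m) ^ 2 / 2 + (m + m) := by ring_nf; omega

theorem rnBook_three_upper (n : ℕ) (hn : Even n) (hn2 : 2 ≤ n) :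
    rnBook 3 n ≤ 3 * n ^ 2 / 2 + n :=
  rnBook_three_upper_general n hn
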